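/- Let G be a reaction network on species X, let κ be reaction rates such that (G,κ) has absolute concentration robustness in every species of a subset ℰ ⊆ X, and suppose that no species of ℰ has a nonzero coordinate in any conservation law of G. If (G,κ) has l distinct positive steady states in some stoichiometric compatibility class, then there is a choice of reaction rates κ' for the projected network G_{−ℰ} such that (G_{−ℰ}, κ') has at least l distinct positive steady states in some stoichiometric compatibility class; explicitly, for a single ACR species with ACR value a, κ'_{ỹ→ỹ'} = Σ κ_{y→y'} a^{y_1}, the sum over all reactions y→y' of G projecting to ỹ→ỹ'. -/
import Mathlib


/-- A reaction `y → y'` is a pair of complexes, each a vector of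
nonnegative integer coefficients indexed by the species: the source and the target. -/
abbrev Reaction (S : Type) : Type := (S → ℕ) × (S → ℕ)

section General

variable {S : Type} [Fintype S] [DecidableEq S]

/-- The complex consisting of a single copy of species `s`. -/
def unitC (s : S) : S → ℕ := fun t => if t = s then 1 else 0

/-- The complex `a + b`. -/
def pairC (a b : S) : S → ℕ := fun t => (if t = a then 1 else 0) + (if t = b then 1 else 0)

/-- The mass action right-hand side `f_κ` of a network `R` with rates `κ`. -/
def massAction (R : Finset (Reaction S)) (κ : Reaction S → ℝ) (x : S → ℝ) : S → ℝ :=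
  fun s => ∑ r ∈ R, κ r * (∏ t, x t ^ r.1 t) * ((r.2 s : ℝ) - (r.1 s : ℝ))

/-- The stoichiometric subspace of a network: the span of its reaction vectors. -/
def stoichSubspace (R : Finset (Reaction S)) : Submodule ℝ (S → ℝ) :=
  Submodule.span ℝ ((fun r : Reaction S => fun s => ((r.2 s : ℝ) - (r.1 s : ℝ))) '' ↑R)

/-- A positive steady state of the mass action system `(R, κ)`. -/
def isPosSteadyState (R : Finset (Reaction S)) (κ : Reaction S → ℝ) (x : S → ℝ) : Prop :=
  (∀ s, 0 < x s) ∧ massAction R κ x = 0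

/-- A steady state is nondegenerate if the kernel of the Jacobian of the mass action
right-hand side intersects the stoichiometric subspace trivially. -/
def nondegenerate (R : Finset (Reaction S)) (κ : Reaction S → ℝ) (x : S → ℝ) : Prop :=
  ∀ v ∈ stoichSubspace R, fderiv ℝ (massAction R κ) x v = 0 → v = 0

/-- A network admits nondegenerate multistationarity if for some positive rates there are
two distinct nondegenerate positive steady states in the same stoichiometric
compatibility class. -/
def admitsNondegMultistationarity (R : Finset (Reaction S)) : Prop :=
  ∃ κ : Reaction S → ℝ, (∀ r ∈ R, 0 < κ r) ∧
    ∃ x y : S → ℝ, x ≠ y ∧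
      isPosSteadyState R κ x ∧ isPosSteadyState R κ y ∧
      nondegenerate R κ x ∧ nondegenerate R κ y ∧
      y - x ∈ stoichSubspace R

/-- The inflow reaction `0 → s`. -/
def inflow (s : S) : Reaction S := (fun _ => 0, unitC s)

/-- The outflow reaction `s → 0`. -/
def outflow (s : S) : Reaction S := (unitC s, fun _ => 0)

/-- The open network on `E`: add inflow and outflow reactions for every species of `E`. -/
def openOn (R : Finset (Reaction S)) (E : Finset S) : Finset (Reaction S) :=
  R ∪ E.image inflow ∪ E.image outflow

/-- A conservation law: a vector orthogonal to the stoichiometric subspace. -/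
def conservationLaw (R : Finset (Reaction S)) (w : S → ℝ) : Prop :=
  ∀ v ∈ stoichSubspace R, ∑ s, w s * v s = 0

/-- A set `E` of species is independently conserved in `R` if there are conservation laws
`L e` for `e ∈ E` such that `L e` has a nonzero coordinate at `e` and zero coordinate at
`e` for every other `L e'`, `e' ∈ E`. -/
def IndepConserved (R : Finset (Reaction S)) (E : Finset S) : Prop :=
  ∃ L : S → (S → ℝ), ∀ e ∈ E,
    conservationLaw R (L e) ∧ L e e ≠ 0 ∧ ∀ e' ∈ E, e' ≠ e → L e' e = 0

/-- A species is closed in `R` if neither its inflow nor its outflow is a reaction of `R`. -/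
def ClosedIn (R : Finset (Reaction S)) (s : S) : Prop :=
  inflow s ∉ R ∧ outflow s ∉ R

/-- Projection of a complex onto the coordinates outside `E`. -/
def projC (E : Finset S) (y : S → ℕ) : {s : S // s ∉ E} → ℕ := fun s => y s.val

/-- Projection of a reaction onto the coordinates outside `E`. -/
def projR (E : Finset S) (r : Reaction S) : Reaction {s : S // s ∉ E} :=
  (projC E r.1, projC E r.2)

/-- The projected network `G₋E` on the species outside `E`: project all reactions and
remove self-loops. -/
def projNet (R : Finset (Reaction S)) (E : Finset S) : Finset (Reaction {s : S // s ∉ E}) :=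
  (R.image (projR E)).filter fun r => r.1 ≠ r.2

/-- Inclusion of a reaction on the species of `E` into a reaction on all of `S`. -/
def inclR (E : Finset S) (r : Reaction {s : S // s ∈ E}) : Reaction S :=
  (fun s => if h : s ∈ E then r.1 ⟨s, h⟩ else 0,
   fun s => if h : s ∈ E then r.2 ⟨s, h⟩ else 0)

/-- `R` has at most `l` positive steady states in each stoichiometric compatibility class,
for every choice of positive reaction rates: there is no injective family of `l + 1`
positive steady states lying pairwise in the same compatibility class. -/
def atMostPosSS (R : Finset (Reaction S)) (l : ℕ) : Prop :=
  ∀ κ : Reaction S → ℝ, (∀ r ∈ R, 0 < κ r) →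
    ∀ f : Fin (l + 1) → (S → ℝ),
      (∀ j, isPosSteadyState R κ (f j)) →
      (∀ j k, f k - f j ∈ stoichSubspace R) →
      ¬ Function.Injective f

/-- Monostationarity: at most one positive steady state in each stoichiometric
compatibility class, for every choice of positive rates. -/
def monostationary (R : Finset (Reaction S)) : Prop :=
  atMostPosSS R 1

end General

/-- Species of the sequential `n`-site phosphorylation–dephosphorylation cycle:
the enzymes `E`, `F`, the substrates `S i` for `i = 0, …, n`, and the intermediates
`ES i` for `i = 0, …, n-1` and `FS i` (denoting `FS_{i+1}`) for `i = 0, …, n-1`. -/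
inductive PS (n : ℕ) : Type
  | E : PS n
  | F : PS n
  | S : Fin (n + 1) → PS n
  | ES : Fin n → PS n
  | FS : Fin n → PS n
deriving DecidableEq, Fintype

/-- The sequential `n`-site phosphorylation–dephosphorylation cycle `𝒫ⁿ`, with the `6n`
reactions `S_i + E ⇌ ES_i`, `ES_i → S_{i+1} + E` for `i = 0, …, n-1` and
`S_i + F ⇌ FS_i`, `FS_i → S_{i-1} + F` for `i = 1, …, n`. -/
def Pcycle (n : ℕ) : Finset (Reaction (PS n)) :=
  (Finset.univ.image fun i : Fin n => (pairC (PS.S i.castSucc) PS.E, unitC (PS.ES i))) ∪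
  (Finset.univ.image fun i : Fin n => (unitC (PS.ES i), pairC (PS.S i.castSucc) PS.E)) ∪
  (Finset.univ.image fun i : Fin n => (unitC (PS.ES i), pairC (PS.S i.succ) PS.E)) ∪
  (Finset.univ.image fun i : Fin n => (pairC (PS.S i.succ) PS.F, unitC (PS.FS i))) ∪
  (Finset.univ.image fun i : Fin n => (unitC (PS.FS i), pairC (PS.S i.succ) PS.F)) ∪
  (Finset.univ.image fun i : Fin n => (unitC (PS.FS i), pairC (PS.S i.castSucc) PS.F))

section AuxACR

variable {S : Type} [Fintype S] [DecidableEq S]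

/-- Projection of the stoichiometric subspace lands in the stoichiometric subspace
of the projected network. -/
lemma proj_stoich_mem (R : Finset (Reaction S)) (E : Finset S) {v : S → ℝ}
    (hv : v ∈ stoichSubspace R) :
    (fun s : {s : S // s ∉ E} => v s.val) ∈ stoichSubspace (projNet R E) := by
  let π : (S → ℝ) →ₗ[ℝ] ({s : S // s ∉ E} → ℝ) := LinearMap.funLeft ℝ ℝ Subtype.val
  have hmem : π v ∈ (stoichSubspace R).map π := Submodule.mem_map_of_mem hv
  rw [stoichSubspace, Submodule.map_span] at hmem
  refine Submodule.span_le.mpr ?_ hmem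
  rintro _ ⟨_, ⟨r, hr, rfl⟩, rfl⟩
  by_cases hloop : (projR E r).1 = (projR E r).2
  · have : π (fun s => ((r.2 s : ℝ) - (r.1 s : ℝ))) = 0 := by
      funext s
      have := congrFun hloop s
      simp only [projR, projC] at this
      simp [π, LinearMap.funLeft_apply, this]
    rw [this]
    exact Submodule.zero_mem _
  · apply Submodule.subset_span
    refine ⟨projR E r, ?_, rfl⟩
    simp only [projNet, Finset.coe_filter, Set.mem_setOf_eq]
    exact ⟨Finset.mem_image.mpr ⟨r, hr, rfl⟩, hloop⟩

/-- If `x` is a steady state of `(R,κ)` whose coordinates on `E` are given by `a`,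
then its projection is a steady state of the projected network with the projected
rates. -/
lemma steady_proj (R : Finset (Reaction S)) (E : Finset S) (κ : Reaction S → ℝ)
    (a x : S → ℝ) (hx : ∀ e ∈ E, x e = a e)
    (hss : massAction R κ x = 0) :
    massAction (projNet R E)
      (fun r' => ∑ r ∈ R.filter (fun r => projR E r = r'), κ r * ∏ e ∈ E, a e ^ r.1 e)
      (fun s => x s.val) = 0 := by
  funext s
  have step1 :
      massAction (projNet R E)
        (fun r' => ∑ r ∈ R.filter (fun r => projR E r = r'), κ r * ∏ e ∈ E, a e ^ r.1 e)
        (fun s => x s.val) s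
      = ∑ r' ∈ projNet R E, ∑ r ∈ R.filter (fun r => projR E r = r'),
          (κ r * (∏ e ∈ E, a e ^ r.1 e)
            * (∏ t, x t.val ^ (projR E r).1 t)
            * (((projR E r).2 s : ℝ) - ((projR E r).1 s : ℝ))) := by
    unfold massAction
    refine Finset.sum_congr rfl fun r' _ => ?_
    rw [Finset.sum_mul, Finset.sum_mul]
    exact Finset.sum_congr rfl fun r hr => by
      rw [(Finset.mem_filter.mp hr).2]
  rw [step1, Finset.sum_fiberwise_eq_sum_filter]
  have hG : ∀ r ∈ R,
      (κ r * (∏ e ∈ E, a e ^ r.1 e)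
        * (∏ t : {s : S // s ∉ E}, x t.val ^ (projR E r).1 t)
        * (((projR E r).2 s : ℝ) - ((projR E r).1 s : ℝ)))
      = κ r * (∏ t, x t ^ r.1 t) * ((r.2 s.val : ℝ) - (r.1 s.val : ℝ)) := by
    intro r _
    have hPQ : (∏ e ∈ E, a e ^ r.1 e)
        * (∏ t : {s : S // s ∉ E}, x t.val ^ (projR E r).1 t)
        = ∏ t, x t ^ r.1 t := by
      have h1 : (∏ e ∈ E, a e ^ r.1 e) = ∏ e ∈ E, x e ^ r.1 e :=
        Finset.prod_congr rfl fun e he => by rw [hx e he]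
      have h2 : (∏ t : {s : S // s ∉ E}, x t.val ^ (projR E r).1 t)
          = ∏ t ∈ Eᶜ, x t ^ r.1 t := by
        rw [Finset.prod_subtype Eᶜ (fun t => Finset.mem_compl) (fun t => x t ^ r.1 t)]
        rfl
      rw [h1, h2, Finset.prod_mul_prod_compl]
    rw [mul_assoc (κ r), hPQ]
    rfl
  have hsplit := Finset.sum_filter_add_sum_filter_not R
      (fun r => projR E r ∈ projNet R E)
      (fun r => κ r * (∏ t, x t ^ r.1 t) * ((r.2 s.val : ℝ) - (r.1 s.val : ℝ)))
  have hzero : ∑ r ∈ R.filter (fun r => ¬ projR E r ∈ projNet R E),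
      κ r * (∏ t, x t ^ r.1 t) * ((r.2 s.val : ℝ) - (r.1 s.val : ℝ)) = 0 := by
    apply Finset.sum_eq_zero
    intro r hr
    obtain ⟨hrR, hrn⟩ := Finset.mem_filter.mp hr
    have hloop : (projR E r).1 = (projR E r).2 := by
      by_contra hne
      exact hrn (Finset.mem_filter.mpr ⟨Finset.mem_image.mpr ⟨r, hrR, rfl⟩, hne⟩)
    have := congrFun hloop s
    simp only [projR, projC] at this
    rw [this]
    ring
  have hcongr : ∑ r ∈ R.filter (fun r => projR E r ∈ projNet R E),
      (κ r * (∏ e ∈ E, a e ^ r.1 e)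
        * (∏ t : {s : S // s ∉ E}, x t.val ^ (projR E r).1 t)
        * (((projR E r).2 s : ℝ) - ((projR E r).1 s : ℝ)))
      = ∑ r ∈ R.filter (fun r => projR E r ∈ projNet R E),
          κ r * (∏ t, x t ^ r.1 t) * ((r.2 s.val : ℝ) - (r.1 s.val : ℝ)) :=
    Finset.sum_congr rfl fun r hr => hG r (Finset.mem_filter.mp hr).1
  rw [hcongr]
  have hall : ∑ r ∈ R, κ r * (∏ t, x t ^ r.1 t)
      * ((r.2 s.val : ℝ) - (r.1 s.val : ℝ)) = 0 := by
    have h0 : massAction R κ x s.val = 0 := by rw [hss]; rfl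
    exact h0
  rw [← hsplit, hzero, add_zero] at hall
  rw [hall]
  rfl

/-- Positivity of the projected rates. -/
lemma kappa'_pos (R : Finset (Reaction S)) (E : Finset S) (κ : Reaction S → ℝ)
    (hκ : ∀ r ∈ R, 0 < κ r) (a : S → ℝ) (hapos : ∀ e ∈ E, 0 < a e) :
    ∀ r' ∈ projNet R E,
      0 < ∑ r ∈ R.filter (fun r => projR E r = r'), κ r * ∏ e ∈ E, a e ^ r.1 e := by
  intro r' hr'
  obtain ⟨hr'im, -⟩ := Finset.mem_filter.mp hr'
  obtain ⟨r, hr, hrr'⟩ := Finset.mem_image.mp hr'im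
  apply Finset.sum_pos
  · intro i hi
    exact mul_pos (hκ i (Finset.mem_filter.mp hi).1)
      (Finset.prod_pos fun e he => pow_pos (hapos e he) _)
  · exact ⟨r, Finset.mem_filter.mpr ⟨hr, hrr'⟩⟩

/-- The master reduction lemma, for an arbitrary vector `a` of ACR values on `E`. -/
lemma acr_reduction_aux (R : Finset (Reaction S)) (E : Finset S)
    (κ : Reaction S → ℝ) (hκ : ∀ r ∈ R, 0 < κ r)
    (a : S → ℝ) (hapos : ∀ e ∈ E, 0 < a e)
    (haval : ∀ x : S → ℝ, isPosSteadyState R κ x → ∀ e ∈ E, x e = a e)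
    (l : ℕ) (f : Fin l → (S → ℝ)) (hf : Function.Injective f)
    (hfss : ∀ j, isPosSteadyState R κ (f j))
    (hfcc : ∀ j k, f k - f j ∈ stoichSubspace R) :
    (∀ r' ∈ projNet R E,
      0 < ∑ r ∈ R.filter (fun r => projR E r = r'), κ r * ∏ e ∈ E, a e ^ r.1 e) ∧
    ∃ g : Fin l → ({s : S // s ∉ E} → ℝ), Function.Injective g ∧
      (∀ j, isPosSteadyState (projNet R E)
        (fun r' => ∑ r ∈ R.filter (fun r => projR E r = r'), κ r * ∏ e ∈ E, a e ^ r.1 e)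
        (g j)) ∧
      (∀ j k, g k - g j ∈ stoichSubspace (projNet R E)) := by
  refine ⟨kappa'_pos R E κ hκ a hapos, fun j => fun s => f j s.val, ?_, ?_, ?_⟩
  · intro j k h
    apply hf
    funext s
    by_cases hs : s ∈ E
    · rw [haval (f j) (hfss j) s hs, haval (f k) (hfss k) s hs]
    · exact congrFun h ⟨s, hs⟩
  · intro j
    exact ⟨fun s => (hfss j).1 s.val,
      steady_proj R E κ a (f j) (haval (f j) (hfss j)) (hfss j).2⟩
  · intro j k
    exact proj_stoich_mem R E (hfcc j k)

end AuxACR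

/-- **ACR-Reduction.** Suppose `(G, κ)` has absolute concentration
robustness in every species of `E` and no species of `E` has a nonzero coordinate in any
conservation law of `G`. If `(G, κ)` has `l` distinct positive steady states in some
stoichiometric compatibility class, then some choice of positive rates `κ'` on the
projected network `G₋E` yields at least `l` distinct positive steady states of
`(G₋E, κ')` in some compatibility class of `G₋E`; explicitly, for a single ACR species
`e` with ACR value `a`, the rates `κ'_{ỹ→ỹ'} = ∑ κ_{y→y'} a^{y_e}` (sum over reactions
of `G` projecting onto `ỹ→ỹ'`) work. -/
theorem acr_reduction {S : Type} [Fintype S] [DecidableEq S]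
    (R : Finset (Reaction S)) (E : Finset S)
    (κ : Reaction S → ℝ) (hκ : ∀ r ∈ R, 0 < κ r)
    (hACR : ∀ e ∈ E, ∃ a : ℝ, 0 < a ∧ ∀ x : S → ℝ, isPosSteadyState R κ x → x e = a)
    (hNoCons : ∀ w : S → ℝ, conservationLaw R w → ∀ e ∈ E, w e = 0)
    (l : ℕ) (f : Fin l → (S → ℝ)) (hf : Function.Injective f)
    (hfss : ∀ j, isPosSteadyState R κ (f j))
    (hfcc : ∀ j k, f k - f j ∈ stoichSubspace R) :
    (∃ κ' : Reaction {s : S // s ∉ E} → ℝ,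
        (∀ r ∈ projNet R E, 0 < κ' r) ∧
        ∃ g : Fin l → ({s : S // s ∉ E} → ℝ), Function.Injective g ∧
          (∀ j, isPosSteadyState (projNet R E) κ' (g j)) ∧
          (∀ j k, g k - g j ∈ stoichSubspace (projNet R E))) ∧
    (∀ e : S, E = {e} → ∀ a : ℝ, 0 < a →
      (∀ x : S → ℝ, isPosSteadyState R κ x → x e = a) →
      (∀ r' ∈ projNet R E,
          0 < ∑ r ∈ R.filter (fun r => projR E r = r'), κ r * a ^ r.1 e) ∧
      ∃ g : Fin l → ({s : S // s ∉ E} → ℝ), Function.Injective g ∧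
        (∀ j, isPosSteadyState (projNet R E)
            (fun r' => ∑ r ∈ R.filter (fun r => projR E r = r'), κ r * a ^ r.1 e) (g j)) ∧
        (∀ j k, g k - g j ∈ stoichSubspace (projNet R E))) := by
  constructor
  · classical
    set a : S → ℝ := fun e => if h : e ∈ E then (hACR e h).choose else 1 with ha
    have hapos : ∀ e ∈ E, 0 < a e := fun e he => by
      simp only [ha, dif_pos he]; exact (hACR e he).choose_spec.1
    have haval : ∀ x : S → ℝ, isPosSteadyState R κ x → ∀ e ∈ E, x e = a e :=
      fun x hx e he => by
        simp only [ha, dif_pos he]; exact (hACR e he).choose_spec.2 x hx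
    obtain ⟨hpos, hg⟩ := acr_reduction_aux R E κ hκ a hapos haval l f hf hfss hfcc
    exact ⟨_, hpos, hg⟩
  · intro e hE aa haa haval
    subst hE
    have key := acr_reduction_aux R {e} κ hκ (fun _ => aa) (fun _ _ => haa)
      (fun x hx e' he' => by
        rw [Finset.mem_singleton] at he'
        subst he'
        exact haval x hx) l f hf hfss hfcc
    simp only [Finset.prod_singleton] at key
    exact key
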